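/- Let {𝒜_k}_{k≥1} be a sequence of wild labyrinth patterns with widths m_k ≥ 3. Then the limit set L_∞ (a mixed wild labyrinth fractal) is connected; in particular every self-similar wild labyrinth fractal (the case 𝒜_k = 𝒜_1 for all k) is connected. -/

import Mathlib

/-!
Every level set `L_n` is a finite union of closed squares whose side-adjacency graph is
connected: inside a white square of level `n` the copy of the connected pattern `𝒜_{n+1}` is
connected, and the copies in two side-adjacent white squares touch along the exit pair of
`𝒜_{n+1}` pointing from one to the other. So the `L_n` form a decreasing sequence of compact
connected sets, and such an intersection is connected in any Hausdorff space: were it split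
by two disjoint open sets, by compactness some `L_n` would already lie in their union.
-/

open Set

namespace Labyrinth

/-- The closed square `S_{i,j,m} = [i/m,(i+1)/m] × [j/m,(j+1)/m]` of the `m × m` grid
on the unit square, indexed by `p = (i,j)`. -/
def cell (m : ℕ) (p : ℕ × ℕ) : Set (ℝ × ℝ) :=
  Icc ((p.1 : ℝ) / (m : ℝ)) (((p.1 : ℝ) + 1) / (m : ℝ)) ×ˢ
    Icc ((p.2 : ℝ) / (m : ℝ)) (((p.2 : ℝ) + 1) / (m : ℝ))

/-- An `m`-pattern: a nonempty set of grid indices within the `m × m` grid. -/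
def IsPattern (m : ℕ) (A : Set (ℕ × ℕ)) : Prop :=
  A.Nonempty ∧ ∀ p ∈ A, p.1 < m ∧ p.2 < m

/-- Two grid squares share a side. -/
def SideAdj (p q : ℕ × ℕ) : Prop :=
  (p.1 = q.1 ∧ (p.2 + 1 = q.2 ∨ q.2 + 1 = p.2)) ∨
  (p.2 = q.2 ∧ (p.1 + 1 = q.1 ∨ q.1 + 1 = p.1))

/-- Two grid squares share a side or a corner. -/
def CornerAdj (p q : ℕ × ℕ) : Prop :=
  SideAdj p q ∨
  ((p.1 + 1 = q.1 ∨ q.1 + 1 = p.1) ∧ (p.2 + 1 = q.2 ∨ q.2 + 1 = p.2))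

/-- The graph `𝒢(𝒜)` of a pattern: vertices are its squares, two squares being
adjacent iff they share a side. -/
def patternGraph (A : Set (ℕ × ℕ)) : SimpleGraph ↥A where
  Adj p q := SideAdj p.1 q.1
  symm := by
    constructor
    rintro ⟨p, hp⟩ ⟨q, hq⟩ h
    rcases h with ⟨h1, h2⟩ | ⟨h1, h2⟩
    · exact Or.inl ⟨h1.symm, h2.symm⟩
    · exact Or.inr ⟨h1.symm, h2.symm⟩
  loopless := by
    constructor
    rintro ⟨p, hp⟩ h
    rcases h with ⟨h1, h2 | h2⟩ | ⟨h1, h2 | h2⟩ <;> omega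

/-- The four sides of a square/pattern. -/
inductive Side | top | bottom | left | right
deriving DecidableEq

/-- `p` is an exit square of the `m`-pattern `A` on the given side. -/
def IsExitSq (m : ℕ) (A : Set (ℕ × ℕ)) : Side → ℕ × ℕ → Prop
  | .top, p => p ∈ A ∧ p.2 = m - 1 ∧ (p.1, 0) ∈ A
  | .bottom, p => p ∈ A ∧ p.2 = 0 ∧ (p.1, m - 1) ∈ A
  | .left, p => p ∈ A ∧ p.1 = 0 ∧ (m - 1, p.2) ∈ A
  | .right, p => p ∈ A ∧ p.1 = m - 1 ∧ (0, p.2) ∈ A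

/-- An `m × m`-labyrinth pattern: a nonempty `m`-pattern, `m ≥ 3`, whose graph is a tree,
with exactly one vertical and exactly one horizontal exit pair, and no two white squares
at diagonally opposite corners. -/
def IsLabyrinthPattern (m : ℕ) (A : Set (ℕ × ℕ)) : Prop :=
  3 ≤ m ∧ IsPattern m A ∧ (patternGraph A).IsTree ∧
    (∃! i : ℕ, (i, m - 1) ∈ A ∧ (i, 0) ∈ A) ∧
    (∃! j : ℕ, (0, j) ∈ A ∧ (m - 1, j) ∈ A) ∧
    ((0, 0) ∈ A → (m - 1, m - 1) ∉ A) ∧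
    ((m - 1, 0) ∈ A → (0, m - 1) ∉ A)

/-- A wild labyrinth pattern: the graph is merely connected, and there is at least one
vertical and at least one horizontal exit pair. -/
def IsWildLabyrinthPattern (m : ℕ) (A : Set (ℕ × ℕ)) : Prop :=
  3 ≤ m ∧ IsPattern m A ∧ (patternGraph A).Connected ∧
    (∃ i : ℕ, (i, m - 1) ∈ A ∧ (i, 0) ∈ A) ∧
    (∃ j : ℕ, (0, j) ∈ A ∧ (m - 1, j) ∈ A) ∧
    ((0, 0) ∈ A → (m - 1, m - 1) ∉ A) ∧
    ((m - 1, 0) ∈ A → (0, m - 1) ∉ A)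

/-- One substitution step: place a copy of the pattern `A'` (of width `m'`) into each
white square of `W`. -/
def subst (m' : ℕ) (A' W : Set (ℕ × ℕ)) : Set (ℕ × ℕ) :=
  {q | ∃ p ∈ W, ∃ r ∈ A', q = (p.1 * m' + r.1, p.2 * m' + r.2)}

/-- The white squares `𝒲_n` of level `n`; `whites m A n` is the paper's `𝒲_n`, where
`A k` is the paper's pattern `𝒜_{k+1}` of width `m k = m_{k+1}`; level `0` is the whole
unit square. -/
def whites (m : ℕ → ℕ) (A : ℕ → Set (ℕ × ℕ)) : ℕ → Set (ℕ × ℕ)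
  | 0 => {(0, 0)}
  | n + 1 => subst (m n) (A n) (whites m A n)

/-- `m(n) = m_1 ⋯ m_n`. -/
def mProd (m : ℕ → ℕ) (n : ℕ) : ℕ := ∏ k ∈ Finset.range n, m k

/-- The black squares `ℬ_n` of level `n`. -/
def blacks (m : ℕ → ℕ) (A : ℕ → Set (ℕ × ℕ)) (n : ℕ) : Set (ℕ × ℕ) :=
  {p : ℕ × ℕ | p.1 < mProd m n ∧ p.2 < mProd m n} \ whites m A n

/-- A border square of the `m × m` grid. -/
def IsBorder (m : ℕ) (p : ℕ × ℕ) : Prop :=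
  p.1 = 0 ∨ p.2 = 0 ∨ p.1 = m - 1 ∨ p.2 = m - 1

/-- `L_n`, the union of the white squares of level `n`. -/
def levelSet (m : ℕ → ℕ) (A : ℕ → Set (ℕ × ℕ)) (n : ℕ) : Set (ℝ × ℝ) :=
  ⋃ p ∈ whites m A n, cell (mProd m n) p

/-- `L_∞ = ⋂_{n ≥ 1} L_n` (the term `n = 0` is the whole unit square). -/
def limitSet (m : ℕ → ℕ) (A : ℕ → Set (ℕ × ℕ)) : Set (ℝ × ℝ) :=
  ⋂ n, levelSet m A n

def unitSquare : Set (ℝ × ℝ) := Icc (0 : ℝ) 1 ×ˢ Icc (0 : ℝ) 1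

/-- A path in a graph (with adjacency `Adj`, within the vertex set `A`)
from `u` to `v`: a nonempty list of distinct, consecutively adjacent squares of `A`,
starting at `u` and ending at `v`. -/
def IsPathIn (Adj : ℕ × ℕ → ℕ × ℕ → Prop) (A : Set (ℕ × ℕ))
    (l : List (ℕ × ℕ)) (u v : ℕ × ℕ) : Prop :=
  l ≠ [] ∧ l.Nodup ∧ l.Chain' Adj ∧ (∀ p ∈ l, p ∈ A) ∧
    l.head? = some u ∧ l.getLast? = some v

/-- `s` is an arc between `a` and `b`: a homeomorphic image of `[0,1]`
with endpoints `a` and `b`. -/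
def IsArc (s : Set (ℝ × ℝ)) (a b : ℝ × ℝ) : Prop :=
  ∃ f : ℝ → ℝ × ℝ, ContinuousOn f (Icc 0 1) ∧ InjOn f (Icc 0 1) ∧
    f '' Icc 0 1 = s ∧ f 0 = a ∧ f 1 = b

/-- `e` is the exit point of `L_∞` of the given type: for every `n ≥ 1` it lies in the
exit square of that type of `𝒲_n`. -/
def IsExitPoint (m : ℕ → ℕ) (A : ℕ → Set (ℕ × ℕ)) (s : Side) (e : ℝ × ℝ) : Prop :=
  ∀ n, 1 ≤ n → ∃ p, IsExitSq (mProd m n) (whites m A n) s p ∧ e ∈ cell (mProd m n) p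

/-- The (closed) edge of the grid square `p` of the `m × m` grid on the given side. -/
def cellEdge (m : ℕ) (p : ℕ × ℕ) : Side → Set (ℝ × ℝ)
  | .top => Icc ((p.1 : ℝ) / (m : ℝ)) (((p.1 : ℝ) + 1) / (m : ℝ)) ×ˢ {((p.2 : ℝ) + 1) / (m : ℝ)}
  | .bottom => Icc ((p.1 : ℝ) / (m : ℝ)) (((p.1 : ℝ) + 1) / (m : ℝ)) ×ˢ {(p.2 : ℝ) / (m : ℝ)}
  | .left => {(p.1 : ℝ) / (m : ℝ)} ×ˢ Icc ((p.2 : ℝ) / (m : ℝ)) (((p.2 : ℝ) + 1) / (m : ℝ))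
  | .right => {((p.1 : ℝ) + 1) / (m : ℝ)} ×ˢ Icc ((p.2 : ℝ) / (m : ℝ)) (((p.2 : ℝ) + 1) / (m : ℝ))

/-- Directions in the grid. -/
inductive Dir | up | down | left | right
deriving DecidableEq

/-- `stepDir p q d`: the square `q` is the neighbour of `p` in direction `d`. -/
def stepDir (p q : ℕ × ℕ) : Dir → Prop
  | .up => q.1 = p.1 ∧ q.2 = p.2 + 1
  | .down => q.1 = p.1 ∧ p.2 = q.2 + 1
  | .left => q.2 = p.2 ∧ p.1 = q.1 + 1
  | .right => q.2 = p.2 ∧ q.1 = p.1 + 1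

/-- The outward direction through a given side. -/
def outDir : Side → Dir
  | .top => .up
  | .bottom => .down
  | .left => .left
  | .right => .right

def sideOfDir : Dir → Side
  | .up => .top
  | .down => .bottom
  | .left => .left
  | .right => .right

/-- The six types `A, B, C, D, E, F` of paths (and of squares within a path). -/
inductive PTy | A | B | C | D | E | F
deriving DecidableEq

instance : Fintype PTy :=
  ⟨{.A, .B, .C, .D, .E, .F}, by intro x; cases x <;> simp⟩

/-- The exit at which the `x`-path starts: `A`: top→bottom, `B`: left→right,
`C`: top→right, `D`: right→bottom, `E`: bottom→left, `F`: left→top. -/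
def startSide : PTy → Side
  | .A => .top
  | .B => .left
  | .C => .top
  | .D => .right
  | .E => .bottom
  | .F => .left

/-- The exit at which the `x`-path ends. -/
def endSide : PTy → Side
  | .A => .bottom
  | .B => .right
  | .C => .right
  | .D => .bottom
  | .E => .left
  | .F => .top

/-- The two neighbour directions characterising a square of each type. -/
def ptyDirPair : PTy → Dir × Dir
  | .A => (.up, .down)
  | .B => (.left, .right)
  | .C => (.up, .right)
  | .D => (.right, .down)
  | .E => (.down, .left)
  | .F => (.left, .up)

def ptyDirs (τ : PTy) : Set Dir := {(ptyDirPair τ).1, (ptyDirPair τ).2}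

/-- The set of directions from the `i`-th square of the path `l` towards its neighbours
within the path, where the first and last squares (exit squares) are regarded as having
an additional neighbour outside the unit square, in directions `dstart`, `dend`
respectively. -/
def pathDirs (l : List (ℕ × ℕ)) (dstart dend : Dir) (i : ℕ) : Set Dir :=
  {d | (∃ p q, l[i]? = some p ∧ l[i - 1]? = some q ∧ 0 < i ∧ stepDir p q d)
    ∨ (∃ p q, l[i]? = some p ∧ l[i + 1]? = some q ∧ stepDir p q d)
    ∨ (i = 0 ∧ d = dstart)
    ∨ (i + 1 = l.length ∧ d = dend)}

/-- The number of `τ`-squares of the path `l` (with outward exit directions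
`dstart`, `dend`). -/
noncomputable def countTy (l : List (ℕ × ℕ)) (dstart dend : Dir) (τ : PTy) : ℕ :=
  {i | i < l.length ∧ pathDirs l dstart dend i = ptyDirs τ}.ncard

/-- `M(n) = M_1 ⋅ M_2 ⋅ ⋯ ⋅ M_n`. -/
def matProd (M : ℕ → Matrix PTy PTy ℕ) (n : ℕ) : Matrix PTy PTy ℕ :=
  ((List.range n).map M).prod

/-- A simple closed curve: a subspace homeomorphic to the circle. -/
def IsSimpleClosedCurve (s : Set (ℝ × ℝ)) : Prop :=
  Nonempty (↥s ≃ₜ AddCircle (1 : ℝ))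

/-- The number of `δ`-mesh squares meeting `E`. -/
noncomputable def meshCount (δ : ℝ) (E : Set (ℝ × ℝ)) : ℕ :=
  {q : ℤ × ℤ | (E ∩ (Icc ((q.1 : ℝ) * δ) (((q.1 : ℝ) + 1) * δ) ×ˢ
      Icc ((q.2 : ℝ) * δ) (((q.2 : ℝ) + 1) * δ))).Nonempty}.ncard

/-- The lower box-counting dimension of `E ⊆ ℝ²`. -/
noncomputable def lowerBoxDim (E : Set (ℝ × ℝ)) : ℝ :=
  Filter.liminf (fun δ : ℝ => Real.log (meshCount δ E) / (-Real.log δ)) (nhdsWithin 0 (Ioi 0))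

/-- The upper box-counting dimension of `E ⊆ ℝ²`. -/
noncomputable def upperBoxDim (E : Set (ℝ × ℝ)) : ℝ :=
  Filter.limsup (fun δ : ℝ => Real.log (meshCount δ E) / (-Real.log δ)) (nhdsWithin 0 (Ioi 0))

end Labyrinth

theorem isConnected_iInter_of_directed_isCompact {X ι : Type*} [TopologicalSpace X]
    [T2Space X] [Nonempty ι] {K : ι → Set X} (hdir : Directed (· ⊇ ·) K)
    (hcomp : ∀ i, IsCompact (K i)) (hconn : ∀ i, IsConnected (K i)) :
    IsConnected (⋂ i, K i) := by
  have hclosed : IsClosed (⋂ i, K i) := isClosed_iInter fun i => (hcomp i).isClosed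
  have hcompact : IsCompact (⋂ i, K i) :=
    (hcomp (Classical.arbitrary ι)).of_isClosed_subset hclosed (iInter_subset _ _)
  refine ⟨IsCompact.nonempty_iInter_of_directed_nonempty_isCompact_isClosed K hdir
    (fun i => (hconn i).nonempty) hcomp (fun i => (hcomp i).isClosed), ?_⟩
  refine (isPreconnected_iff_subset_of_fully_disjoint_closed hclosed).2
    fun t t' ht ht' hcover hdisj => ?_
  obtain ⟨U, V, hU, hV, htU, ht'V, hUV⟩ := SeparatedNhds.of_isCompact_isCompact
    (hcompact.inter_right ht) (hcompact.inter_right ht')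
    (hdisj.mono inter_subset_right inter_subset_right)
  obtain ⟨i, hi⟩ : ∃ i, K i ⊆ U ∪ V := exists_subset_nhds_of_isCompact hdir hcomp
    fun x hx => (hU.union hV).mem_nhds <|
      (hcover hx).imp (fun h => htU ⟨hx, h⟩) (fun h => ht'V ⟨hx, h⟩)
  have hsub : (⋂ i, K i) ⊆ K i := iInter_subset K i
  rcases (hconn i).isPreconnected.subset_or_subset hU hV hUV hi with hKU | hKV
  · exact Or.inl fun x hx => (hcover hx).resolve_right fun h =>
      hUV.ne_of_mem (hKU (hsub hx)) (ht'V ⟨hx, h⟩) rfl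
  · exact Or.inr fun x hx => (hcover hx).resolve_left fun h =>
      hUV.ne_of_mem (htU ⟨hx, h⟩) (hKV (hsub hx)) rfl

namespace Labyrinth

section Cells

variable {M : ℕ}

theorem mem_cell (hM : 0 < M) {p : ℕ × ℕ} {a b : ℕ}
    (ha₁ : p.1 ≤ a) (ha₂ : a ≤ p.1 + 1) (hb₁ : p.2 ≤ b) (hb₂ : b ≤ p.2 + 1) :
    ((a : ℝ) / M, (b : ℝ) / M) ∈ cell M p := by
  have hM' : (0 : ℝ) < M := by exact_mod_cast hM
  simp only [cell, mem_prod, mem_Icc]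
  refine ⟨⟨?_, ?_⟩, ?_, ?_⟩ <;> gcongr <;> assumption_mod_cast

theorem isConnected_cell (hM : 0 < M) (p : ℕ × ℕ) : IsConnected (cell M p) :=
  ((convex_Icc _ _).prod (convex_Icc _ _)).isConnected
    ⟨_, mem_cell hM le_rfl (Nat.le_succ _) le_rfl (Nat.le_succ _)⟩

theorem isCompact_cell (p : ℕ × ℕ) : IsCompact (cell M p) :=
  isCompact_Icc.prod isCompact_Icc

theorem SideAdj.cell_inter_nonempty (hM : 0 < M) {p q : ℕ × ℕ} (h : SideAdj p q) :
    (cell M p ∩ cell M q).Nonempty := by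
  refine ⟨(((max p.1 q.1 : ℕ) : ℝ) / M, ((max p.2 q.2 : ℕ) : ℝ) / M),
    mem_cell hM ?_ ?_ ?_ ?_, mem_cell hM ?_ ?_ ?_ ?_⟩ <;>
  · rcases h with ⟨_, _ | _⟩ | ⟨_, _ | _⟩ <;> omega

theorem Icc_div_mul_subset {M' i a : ℕ} (hM : 0 < M) (ha : a < M') :
    Icc (((i * M' + a : ℕ) : ℝ) / (M * M' : ℕ)) (((i * M' + a : ℕ) + 1 : ℝ) / (M * M' : ℕ)) ⊆
      Icc ((i : ℝ) / M) (((i : ℝ) + 1) / M) := by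
  have hM' : (0 : ℝ) < M := by exact_mod_cast hM
  have hM'' : (0 : ℝ) < M' := by exact_mod_cast Nat.zero_lt_of_lt ha
  have ha' : (a : ℝ) + 1 ≤ M' := by exact_mod_cast ha
  have hMM' : (0 : ℝ) < (M * M' : ℕ) := by push_cast; positivity
  apply Icc_subset_Icc
  · rw [div_le_div_iff₀ hM' hMM']
    push_cast
    nlinarith
  · rw [div_le_div_iff₀ hMM' hM']
    push_cast
    nlinarith [mul_le_mul_of_nonneg_left ha' hM'.le]

def embed (M' : ℕ) (p r : ℕ × ℕ) : ℕ × ℕ := (p.1 * M' + r.1, p.2 * M' + r.2)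

theorem cell_embed_subset {M' : ℕ} (hM : 0 < M) {p r : ℕ × ℕ} (hr₁ : r.1 < M')
    (hr₂ : r.2 < M') : cell (M * M') (embed M' p r) ⊆ cell M p :=
  prod_mono (Icc_div_mul_subset hM hr₁) (Icc_div_mul_subset hM hr₂)

theorem isConnected_biUnion_cell (hM : 0 < M) {W : Set (ℕ × ℕ)} (hne : W.Nonempty)
    (hW : (patternGraph W).Preconnected) : IsConnected (⋃ p ∈ W, cell M p) := by
  refine IsConnected.biUnion_of_reflTransGen hne (fun p _ => isConnected_cell hM p)
    fun p hp q hq => ?_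
  have hpq := (SimpleGraph.reachable_iff_reflTransGen _ _).1 (hW ⟨p, hp⟩ ⟨q, hq⟩)
  exact Relation.ReflTransGen.lift Subtype.val
    (fun a b hab => ⟨SideAdj.cell_inter_nonempty hM hab, a.2⟩) _ _ hpq

end Cells

section Subst

variable {m' : ℕ} {A' W : Set (ℕ × ℕ)}

theorem subst_eq_image2 : subst m' A' W = image2 (embed m') W A' := by
  ext q
  simp only [subst, embed, mem_image2]
  constructor <;> rintro ⟨p, hp, r, hr, h⟩ <;> exact ⟨p, hp, r, hr, h.symm⟩

theorem IsPattern.finite {A : Set (ℕ × ℕ)} (hA : IsPattern m' A) : A.Finite :=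
  ((finite_Iio m').prod (finite_Iio m')).subset fun p hp => hA.2 p hp

theorem sideAdj_embed {r s : ℕ × ℕ} (p : ℕ × ℕ) (h : SideAdj r s) :
    SideAdj (embed m' p r) (embed m' p s) := by
  simp only [SideAdj, embed] at h ⊢
  omega

def copyHom (m' : ℕ) (p : W) : patternGraph A' →g patternGraph (subst m' A' W) where
  toFun r := ⟨embed m' p r, p, p.2, r, r.2, rfl⟩
  map_rel' h := sideAdj_embed p h

theorem SideAdj.exists_embed_sideAdj (hm' : 1 ≤ m')
    (hv : ∃ i, (i, m' - 1) ∈ A' ∧ (i, 0) ∈ A') (hh : ∃ j, (0, j) ∈ A' ∧ (m' - 1, j) ∈ A')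
    {p q : ℕ × ℕ} (h : SideAdj p q) :
    ∃ r ∈ A', ∃ s ∈ A', SideAdj (embed m' p r) (embed m' q s) := by
  obtain ⟨i, hi_top, hi_bot⟩ := hv
  obtain ⟨j, hj_left, hj_right⟩ := hh
  have key (c : ℕ) : c * m' + (m' - 1) + 1 = (c + 1) * m' := by
    rw [add_assoc, Nat.sub_add_cancel hm', add_one_mul]
  simp only [SideAdj, embed]
  rcases h with ⟨h₁, h₂ | h₂⟩ | ⟨h₁, h₂ | h₂⟩
  · exact ⟨_, hi_top, _, hi_bot, Or.inl ⟨by rw [h₁], Or.inl (by rw [key, h₂]; rfl)⟩⟩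
  · exact ⟨_, hi_bot, _, hi_top, Or.inl ⟨by rw [h₁], Or.inr (by rw [key, h₂]; rfl)⟩⟩
  · exact ⟨_, hj_right, _, hj_left, Or.inr ⟨by rw [h₁], Or.inl (by rw [key, h₂]; rfl)⟩⟩
  · exact ⟨_, hj_left, _, hj_right, Or.inr ⟨by rw [h₁], Or.inr (by rw [key, h₂]; rfl)⟩⟩

theorem preconnected_patternGraph_subst (hm' : 1 ≤ m') (hA' : (patternGraph A').Connected)
    (hv : ∃ i, (i, m' - 1) ∈ A' ∧ (i, 0) ∈ A') (hh : ∃ j, (0, j) ∈ A' ∧ (m' - 1, j) ∈ A')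
    (hW : (patternGraph W).Preconnected) : (patternGraph (subst m' A' W)).Preconnected := by
  have hcopies : ∀ p q : W, ∀ r s : A',
      (patternGraph (subst m' A' W)).Reachable (copyHom m' p r) (copyHom m' q s) := by
    intro p q
    induction (SimpleGraph.reachable_iff_reflTransGen p q).1 (hW p q) with
    | refl => exact fun r s => (hA'.preconnected r s).map (copyHom m' p)
    | @tail q₁ q₂ _ hq ih =>
      intro r s
      obtain ⟨r', hr', s', hs', hadj⟩ := SideAdj.exists_embed_sideAdj hm' hv hh hq
      have hcross : (patternGraph (subst m' A' W)).Adj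
          (copyHom m' q₁ ⟨r', hr'⟩) (copyHom m' q₂ ⟨s', hs'⟩) := hadj
      exact ((ih r ⟨r', hr'⟩).trans hcross.reachable).trans
        ((hA'.preconnected _ s).map (copyHom m' q₂))
  rintro ⟨_, p, hp, r, hr, rfl⟩ ⟨_, q, hq, s, hs, rfl⟩
  exact hcopies ⟨p, hp⟩ ⟨q, hq⟩ ⟨r, hr⟩ ⟨s, hs⟩

end Subst

section Levels

variable {m : ℕ → ℕ} {A : ℕ → Set (ℕ × ℕ)}

theorem mProd_pos (hm : ∀ k, 0 < m k) (n : ℕ) : 0 < mProd m n :=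
  Finset.prod_pos fun k _ => hm k

theorem mProd_succ (n : ℕ) : mProd m (n + 1) = mProd m n * m n :=
  Finset.prod_range_succ _ _

theorem finite_whites (hA : ∀ k, IsPattern (m k) (A k)) (n : ℕ) : (whites m A n).Finite := by
  induction n with
  | zero => exact finite_singleton _
  | succ n ih =>
    rw [whites, subst_eq_image2]
    exact ih.image2 _ (hA n).finite

theorem nonempty_whites (hA : ∀ k, IsPattern (m k) (A k)) (n : ℕ) :
    (whites m A n).Nonempty := by
  induction n with
  | zero => exact singleton_nonempty _
  | succ n ih =>
    rw [whites, subst_eq_image2]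
    exact ih.image2 (hA n).1

theorem preconnected_patternGraph_whites (hwild : ∀ k, IsWildLabyrinthPattern (m k) (A k))
    (n : ℕ) : (patternGraph (whites m A n)).Preconnected := by
  induction n with
  | zero =>
    rintro ⟨p, rfl⟩ ⟨q, rfl⟩
    rfl
  | succ n ih =>
    obtain ⟨hm, -, hconn, hv, hh, -⟩ := hwild n
    exact preconnected_patternGraph_subst (by omega) hconn hv hh ih

theorem antitone_levelSet (hm : ∀ k, 0 < m k) (hA : ∀ k, IsPattern (m k) (A k)) :
    Antitone (levelSet m A) := by
  refine antitone_nat_of_succ_le fun n => iUnion₂_subset ?_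
  rintro _ ⟨p, hp, r, hr, rfl⟩
  rw [mProd_succ]
  exact (cell_embed_subset (mProd_pos hm n) ((hA n).2 r hr).1 ((hA n).2 r hr).2).trans
    (subset_biUnion_of_mem hp)

theorem isCompact_levelSet (hA : ∀ k, IsPattern (m k) (A k)) (n : ℕ) :
    IsCompact (levelSet m A n) :=
  (finite_whites hA n).isCompact_biUnion fun p _ => isCompact_cell p

end Levels

end Labyrinth

open Labyrinth in
/-- every mixed wild labyrinth fractal (in particular every self-similar
wild labyrinth fractal, i.e. the case of a constant sequence of patterns) is connected. -/
theorem wild_limitSet_connected (m : ℕ → ℕ) (A : ℕ → Set (ℕ × ℕ))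
    (hwild : ∀ k, IsWildLabyrinthPattern (m k) (A k)) :
    IsConnected (limitSet m A) := by
  have hm : ∀ k, 0 < m k := fun k => by have := (hwild k).1; omega
  have hA : ∀ k, IsPattern (m k) (A k) := fun k => (hwild k).2.1
  exact isConnected_iInter_of_directed_isCompact (antitone_levelSet hm hA).directed_ge
    (isCompact_levelSet hA) fun n => isConnected_biUnion_cell (mProd_pos hm n)
      (nonempty_whites hA n) (preconnected_patternGraph_whites hwild n)
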